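/- Consider the double complex of the secondary Kodaira surface: A = Λ⟨φ1,φ2,φ̄1,φ̄2⟩ with ∂φ1 = -(1/2)φ1∧φ2, ∂̄φ1 = (1/2)φ1∧φ̄2, ∂φ2 = 0, ∂̄φ2 = (i/2)φ1∧φ̄1, and conjugate relations. Then h^{0,1}_∂̄ = 1 (generated by φ̄2) while h^{0,1}_BC = 0; in particular the natural map H^{0,1}_BC → H^{0,1}_∂̄ is not surjective. -/

import Mathlib

open Finset Module Complex

noncomputable section

/-- Index type: subsets of the 4 generators. Generators: 0 ↦ φ1, 1 ↦ φ2, 2 ↦ φ̄1, 3 ↦ φ̄2. -/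
abbrev ι : Type := Finset (Fin 4)

/-- The underlying 16-dimensional vector space of Λ⟨φ1,φ2,φ̄1,φ̄2⟩. -/
abbrev V : Type := ι → ℂ

/-- Basis vector corresponding to the wedge of the generators in `S` (in increasing order). -/
def e (S : ι) : V := fun T => if T = S then 1 else 0

/-- Structure constants of the exterior (wedge) product on basis elements. -/
def wedgeB (S T : ι) : V :=
  if Disjoint S T then
    ((-1 : ℂ) ^ (((S ×ˢ T).filter (fun x => x.2 < x.1)).card)) • e (S ∪ T)
  else 0

/-- The wedge product on `V`. -/
def mulV (v w : V) : V := ∑ S : ι, ∑ T : ι, (v S * w T) • wedgeB S T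

/-- The odd derivation determined by its values `g` on the generators. -/
def der (g : Fin 4 → V) : V →ₗ[ℂ] V :=
  (Pi.basisFun ℂ ι).constr ℂ (fun S =>
    ∑ i ∈ S, ((-1 : ℂ) ^ ((S.filter (fun j => j < i)).card)) •
      mulV (g i) (e (S.erase i)))

/-- Holomorphic degree of a basis index. -/
def pdeg (S : ι) : ℕ := (S ∩ ({0, 1} : Finset (Fin 4))).card

/-- Anti-holomorphic degree of a basis index. -/
def qdeg (S : ι) : ℕ := (S ∩ ({2, 3} : Finset (Fin 4))).card

/-- The bidegree-(p,q) component `A^{p,q}`. -/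
def Apq (p q : ℕ) : Submodule ℂ V :=
  Submodule.span ℂ ((fun S => e S) '' {S : ι | pdeg S = p ∧ qdeg S = q})

/-- The total-degree-k component `A^k`. -/
def Ak (k : ℕ) : Submodule ℂ V :=
  Submodule.span ℂ ((fun S => e S) '' {S : ι | S.card = k})

/-- Dimension of Dolbeault cohomology `H^{p,q}_∂̄ = ker ∂̄ / im ∂̄` in bidegree (p,q). -/
def hD (delbar : V →ₗ[ℂ] V) (p q : ℕ) : ℕ :=
  finrank ℂ (↥(Apq p q ⊓ LinearMap.ker delbar) ⧸
    Submodule.comap (Apq p q ⊓ LinearMap.ker delbar).subtype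
      (Submodule.map delbar (Apq p (q - 1))))

/-- Dimension of Bott-Chern cohomology `H^{p,q}_BC = (ker ∂ ∩ ker ∂̄)/im ∂∂̄` in bidegree (p,q). -/
def hBC (del delbar : V →ₗ[ℂ] V) (p q : ℕ) : ℕ :=
  finrank ℂ (↥(Apq p q ⊓ LinearMap.ker del ⊓ LinearMap.ker delbar) ⧸
    Submodule.comap (Apq p q ⊓ LinearMap.ker del ⊓ LinearMap.ker delbar).subtype
      (Submodule.map (del ∘ₗ delbar) (Apq (p - 1) (q - 1))))

/-- Dimension of Aeppli cohomology `H^{p,q}_A = ker ∂∂̄ / (im ∂ + im ∂̄)` in bidegree (p,q). -/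
def hA (del delbar : V →ₗ[ℂ] V) (p q : ℕ) : ℕ :=
  finrank ℂ (↥(Apq p q ⊓ LinearMap.ker (del ∘ₗ delbar)) ⧸
    Submodule.comap (Apq p q ⊓ LinearMap.ker (del ∘ₗ delbar)).subtype
      (Submodule.map del (Apq (p - 1) q) ⊔ Submodule.map delbar (Apq p (q - 1))))

/-- Dimension of the degree-k de Rham cohomology of the total complex with `d = ∂ + ∂̄`. -/
def betti (d : V →ₗ[ℂ] V) (k : ℕ) : ℕ :=
  finrank ℂ (↥(Ak k ⊓ LinearMap.ker d) ⧸
    Submodule.comap (Ak k ⊓ LinearMap.ker d).subtype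
      (Submodule.map d (Ak (k - 1))))

/-- The `∂` operator of the secondary Kodaira model: ∂φ1 = -(1/2)φ1∧φ2, ∂φ2 = 0,
∂φ̄1 = -(1/2)φ2∧φ̄1, ∂φ̄2 = -(i/2)φ1∧φ̄1 (conjugate relations). -/
def delSK : V →ₗ[ℂ] V :=
  der ![(-(1 : ℂ) / 2) • e {0, 1}, 0, (-(1 : ℂ) / 2) • e {1, 2},
        (-(Complex.I / 2)) • e {0, 2}]

/-- The `∂̄` operator of the secondary Kodaira model: ∂̄φ1 = (1/2)φ1∧φ̄2,
∂̄φ2 = (i/2)φ1∧φ̄1, ∂̄φ̄1 = -(1/2)φ̄1∧φ̄2, ∂̄φ̄2 = 0. -/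
def delbarSK : V →ₗ[ℂ] V :=
  der ![((1 : ℂ) / 2) • e {0, 3}, (Complex.I / 2) • e {0, 2},
        (-(1 : ℂ) / 2) • e {2, 3}, 0]

/-- The total differential of the secondary Kodaira complex. -/
def dSK : V →ₗ[ℂ] V := delSK + delbarSK

/-! Since `A^{0,0}` is spanned by `1` and `∂̄ 1 = 0`, no nonzero `(0,1)`-form is `∂̄`-exact.
On `A^{0,1} = ⟨φ̄1, φ̄2⟩` we have `∂̄φ̄1 = -½ φ̄1∧φ̄2 ≠ 0` and `∂̄φ̄2 = 0`, so the `∂̄`-closed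
`(0,1)`-forms are the multiples of `φ̄2`; but `∂φ̄2 = -(i/2) φ1∧φ̄1 ≠ 0`, so no nonzero
`(0,1)`-form is both `∂`- and `∂̄`-closed. -/

lemma e_eq_basisFun (S : ι) : e S = Pi.basisFun ℂ ι S := by
  ext T
  simp [e, Pi.single_apply]

lemma e_ne_zero (S : ι) : e S ≠ 0 := by
  rw [e_eq_basisFun]
  exact (Pi.basisFun ℂ ι).ne_zero S

lemma smul_e_eq_zero_iff {c : ℂ} {S : ι} : c • e S = 0 ↔ c = 0 := by
  rw [smul_eq_zero, or_iff_left (e_ne_zero S)]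

lemma der_e (g : Fin 4 → V) (S : ι) :
    der g (e S) = ∑ i ∈ S, ((-1 : ℂ) ^ ((S.filter (fun j => j < i)).card)) •
      mulV (g i) (e (S.erase i)) := by
  rw [e_eq_basisFun, der, Basis.constr_basis]

lemma wedgeB_empty (S : ι) : wedgeB S ∅ = e S := by
  simp [wedgeB]

lemma mulV_e_empty (v : V) : mulV v (e ∅) = v := by
  ext T
  simp [mulV, e, wedgeB_empty]

lemma der_e_singleton (g : Fin 4 → V) (i : Fin 4) : der g (e {i}) = g i := by
  have hsign : ({i} : ι).filter (fun j => j < i) = ∅ := by simp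
  rw [der_e, sum_singleton, hsign, card_empty, pow_zero, one_smul, erase_singleton,
    mulV_e_empty]

lemma Apq_zero_zero : Apq 0 0 = Submodule.span ℂ {e ∅} := by
  have hidx : {S : ι | pdeg S = 0 ∧ qdeg S = 0} = {∅} := Set.ext (by decide)
  rw [Apq, hidx, Set.image_singleton]

lemma Apq_zero_one : Apq 0 1 = Submodule.span ℂ {e {2}, e {3}} := by
  have hidx : {S : ι | pdeg S = 0 ∧ qdeg S = 1} = {{2}, {3}} := Set.ext (by decide)
  rw [Apq, hidx, Set.image_pair]

lemma delbarSK_e_empty : delbarSK (e ∅) = 0 := by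
  rw [delbarSK, der_e, sum_empty]

lemma delbarSK_e_two : delbarSK (e {2}) = (-(1 : ℂ) / 2) • e {2, 3} := by
  rw [delbarSK, der_e_singleton]
  rfl

lemma delbarSK_e_three : delbarSK (e {3}) = 0 := by
  rw [delbarSK, der_e_singleton]
  rfl

lemma delSK_e_three : delSK (e {3}) = (-(Complex.I / 2)) • e {0, 2} := by
  rw [delSK, der_e_singleton]
  rfl

lemma map_delbarSK_Apq_zero_zero : Submodule.map delbarSK (Apq 0 0) = ⊥ := by
  rw [Apq_zero_zero, Submodule.map_span, Set.image_singleton, delbarSK_e_empty,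
    Submodule.span_zero_singleton]

lemma Apq_zero_one_inf_ker_delbarSK :
    Apq 0 1 ⊓ LinearMap.ker delbarSK = Submodule.span ℂ {e {3}} := by
  apply le_antisymm
  · intro v hv
    obtain ⟨hv, hker⟩ := Submodule.mem_inf.mp hv
    obtain ⟨a, b, rfl⟩ := Submodule.mem_span_pair.mp (Apq_zero_one ▸ hv)
    have ha : a = 0 := by
      rw [LinearMap.mem_ker, map_add, map_smul, map_smul, delbarSK_e_two, delbarSK_e_three,
        smul_zero, add_zero, smul_smul, smul_e_eq_zero_iff] at hker
      simpa using hker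
    rw [ha, zero_smul, zero_add]
    exact Submodule.smul_mem _ b (Submodule.mem_span_singleton_self _)
  · rw [Submodule.span_le, Set.singleton_subset_iff]
    exact ⟨Apq_zero_one ▸ Submodule.subset_span (by simp), delbarSK_e_three⟩

lemma Apq_zero_one_inf_ker_delSK_inf_ker_delbarSK :
    Apq 0 1 ⊓ LinearMap.ker delSK ⊓ LinearMap.ker delbarSK = ⊥ := by
  rw [inf_right_comm, Apq_zero_one_inf_ker_delbarSK, eq_bot_iff]
  intro v hv
  obtain ⟨hv, hdel⟩ := Submodule.mem_inf.mp hv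
  obtain ⟨b, rfl⟩ := Submodule.mem_span_singleton.mp hv
  rw [LinearMap.mem_ker, map_smul, delSK_e_three, smul_smul, smul_e_eq_zero_iff] at hdel
  have hb : b = 0 := by simpa [Complex.I_ne_zero] using hdel
  rw [hb, zero_smul]
  exact Submodule.zero_mem _

lemma hD_eq_finrank_of_map_eq_bot {delbar : V →ₗ[ℂ] V} {p q : ℕ}
    (h : Submodule.map delbar (Apq p (q - 1)) = ⊥) :
    hD delbar p q = finrank ℂ ↥(Apq p q ⊓ LinearMap.ker delbar) := by
  rw [hD, h, Submodule.comap_bot, Submodule.ker_subtype]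
  exact (Submodule.quotEquivOfEqBot _ rfl).finrank_eq

lemma hBC_eq_zero_of_eq_bot {del delbar : V →ₗ[ℂ] V} {p q : ℕ}
    (h : Apq p q ⊓ LinearMap.ker del ⊓ LinearMap.ker delbar = ⊥) :
    hBC del delbar p q = 0 := by
  rw [hBC, ← Nat.le_zero]
  refine (Submodule.finrank_quotient_le _).trans ?_
  rw [h, finrank_bot]

/-- For the secondary Kodaira double complex: h^{0,1}_∂̄ = 1, generated by φ̄2, while
h^{0,1}_BC = 0; in particular the natural map H^{0,1}_BC → H^{0,1}_∂̄ (induced by the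
identity, i.e. the inclusion ker∂∩ker∂̄ ⊆ ker∂̄ followed by the projection) is not
surjective. -/
theorem secondary_kodaira_bc_to_dolbeault_not_surjective :
    hD delbarSK 0 1 = 1 ∧
    delbarSK (e {3}) = 0 ∧
    (Apq 0 1 ⊓ LinearMap.ker delbarSK =
      Submodule.map delbarSK (Apq 0 0) ⊔ Submodule.span ℂ {e ({3} : Finset (Fin 4))}) ∧
    hBC delSK delbarSK 0 1 = 0 ∧
    ¬ (Apq 0 1 ⊓ LinearMap.ker delbarSK ≤
        Submodule.map delbarSK (Apq 0 0) ⊔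
          (Apq 0 1 ⊓ LinearMap.ker delSK ⊓ LinearMap.ker delbarSK)) := by
  refine ⟨?_, delbarSK_e_three, ?_,
    hBC_eq_zero_of_eq_bot Apq_zero_one_inf_ker_delSK_inf_ker_delbarSK, ?_⟩
  · rw [hD_eq_finrank_of_map_eq_bot (q := 1) map_delbarSK_Apq_zero_zero,
      Apq_zero_one_inf_ker_delbarSK]
    exact finrank_span_singleton (e_ne_zero _)
  · rw [map_delbarSK_Apq_zero_zero, bot_sup_eq, Apq_zero_one_inf_ker_delbarSK]
  · rw [map_delbarSK_Apq_zero_zero, Apq_zero_one_inf_ker_delSK_inf_ker_delbarSK, bot_sup_eq,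
      Apq_zero_one_inf_ker_delbarSK, Submodule.span_singleton_le_iff_mem, Submodule.mem_bot]
    exact e_ne_zero _
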